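/- If w : ℝ → ℝ is a twice continuously differentiable strictly positive solution of w''(y) − w(y) + w(y)² = 0 on ℝ with w'(0) = 0 and w(y) → 0 as y → ±∞, then w(y) = (3/2) sech²(y/2) for all y ∈ ℝ. -/

import Mathlib

/-!
Along a solution of `w'' = w - w²` the energy `w'² / 2 - w² / 2 + w³ / 3` is constant. If `w`
converges at `+∞`, then so does `w'²`, and its limit must vanish: otherwise `|w'|` stays away from
zero while the increments `w (y + 1) - w y` tend to zero. Hence the energy is zero, so `w'(0) = 0`
forces `w(0) ∈ {0, 3/2}`, and positivity leaves `w(0) = 3/2`. The ground state solves the same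
initial value problem, and the first-order system `(u, u') ↦ (u', u - u²)` has a locally Lipschitz
field, so the two solutions coincide.
-/

open Real Filter Set Topology

noncomputable def groundState (y : ℝ) : ℝ := (3/2) * (1 / cosh (y/2))^2

noncomputable def groundStateDeriv (y : ℝ) : ℝ := -(3/2) * sinh (y/2) / cosh (y/2)^3

lemma hasDerivAt_groundState (y : ℝ) : HasDerivAt groundState (groundStateDeriv y) y := by
  have hc : cosh (y/2) ≠ 0 := (cosh_pos _).ne'
  have h := ((((hasDerivAt_id' y).div_const 2).cosh.fun_inv hc).fun_pow 2).const_mul (3/2 : ℝ)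
  simp only [← one_div] at h
  refine h.congr_deriv ?_
  simp only [groundStateDeriv]
  norm_num
  field_simp

lemma hasDerivAt_groundStateDeriv (y : ℝ) :
    HasDerivAt groundStateDeriv (groundState y - groundState y ^ 2) y := by
  have hc : cosh (y/2) ≠ 0 := (cosh_pos _).ne'
  have h := (((hasDerivAt_id' y).div_const 2).sinh.fun_div
    (((hasDerivAt_id' y).div_const 2).cosh.fun_pow 3) (pow_ne_zero 3 hc)).const_mul (-(3/2) : ℝ)
  simp only [← mul_div_assoc] at h
  refine h.congr_deriv ?_
  simp only [groundState]
  field_simp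
  linear_combination -3 * cosh (y/2) ^ 2 * cosh_sq_sub_sinh_sq (y/2)

lemma groundState_zero : groundState 0 = 3/2 := by simp [groundState]

lemma groundStateDeriv_zero : groundStateDeriv 0 = 0 := by simp [groundStateDeriv]

lemma energy_eq_of_hasDerivAt {V f w w' : ℝ → ℝ} (hV : ∀ u, HasDerivAt V (f u) u)
    (hw : ∀ y, HasDerivAt w (w' y) y) (hw' : ∀ y, HasDerivAt w' (f (w y)) y) (x y : ℝ) :
    w' y ^ 2 / 2 - V (w y) = w' x ^ 2 / 2 - V (w x) := by
  have hE : ∀ y, HasDerivAt (fun y => w' y ^ 2 / 2 - V (w y)) 0 y := fun y => by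
    refine ((((hw' y).fun_pow 2).div_const 2).sub ((hV (w y)).comp y (hw y))).congr_deriv ?_
    ring
  exact is_const_of_deriv_eq_zero (fun y => (hE y).differentiableAt) (fun y => (hE y).deriv) y x

lemma eq_zero_of_tendsto_of_tendsto_sq_deriv {w w' : ℝ → ℝ} {a L : ℝ}
    (hw : ∀ y, HasDerivAt w (w' y) y) (hwa : Tendsto w atTop (𝓝 a))
    (hL : Tendsto (fun y => w' y ^ 2) atTop (𝓝 L)) : L = 0 := by
  have hmvt : ∀ x : ℝ, ∃ c ∈ Ioo x (x + 1), w' c = (w (x + 1) - w x) / (x + 1 - x) :=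
    fun x => exists_hasDerivAt_eq_slope w w' (lt_add_one x)
      (fun y _ => (hw y).continuousAt.continuousWithinAt) (fun y _ => hw y)
  choose ξ hξ hξw using hmvt
  have hξ_top : Tendsto ξ atTop atTop :=
    tendsto_atTop_mono (fun x => (hξ x).1.le) tendsto_id
  have hincr : Tendsto (fun x => (w (x + 1) - w x) ^ 2) atTop (𝓝 ((a - a) ^ 2)) :=
    ((hwa.comp (tendsto_atTop_add_const_right _ 1 tendsto_id)).sub hwa).pow 2
  refine tendsto_nhds_unique (hL.comp hξ_top) ?_
  simpa [Function.comp_def, hξw] using hincr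

lemma energy_eq_of_tendsto {V f w w' : ℝ → ℝ} (hV : ∀ u, HasDerivAt V (f u) u)
    (hw : ∀ y, HasDerivAt w (w' y) y) (hw' : ∀ y, HasDerivAt w' (f (w y)) y) {a : ℝ}
    (hwa : Tendsto w atTop (𝓝 a)) (y : ℝ) : w' y ^ 2 / 2 - V (w y) = -V a := by
  have hV_cont : Continuous V := continuous_iff_continuousAt.2 fun u => (hV u).continuousAt
  have hsq : ∀ x, w' x ^ 2 = 2 * (w' y ^ 2 / 2 - V (w y)) + 2 * V (w x) := fun x => by
    linarith [energy_eq_of_hasDerivAt hV hw hw' y x]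
  have hlim : Tendsto (fun x => w' x ^ 2) atTop
      (𝓝 (2 * (w' y ^ 2 / 2 - V (w y)) + 2 * V a)) :=
    (((hV_cont.tendsto a).comp hwa).const_mul 2 |>.const_add _).congr fun x => (hsq x).symm
  linarith [eq_zero_of_tendsto_of_tendsto_sq_deriv hw hwa hlim]

lemma eq_three_halves_of_sq_div_two_sub_cube_div_three_eq_zero {u : ℝ} (hu : 0 < u)
    (h : u ^ 2 / 2 - u ^ 3 / 3 = 0) : u = 3/2 := by
  have hfac : u ^ 2 * (3 - 2 * u) = 0 := by linear_combination 6 * h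
  rcases mul_eq_zero.mp hfac with h0 | h0
  · exact absurd (pow_eq_zero_iff two_ne_zero |>.mp h0) hu.ne'
  · linarith

theorem LocallyLipschitz.eq_of_hasDerivAt {E : Type*} [NormedAddCommGroup E] [NormedSpace ℝ E]
    {v : E → E} (hv : LocallyLipschitz v) {f g : ℝ → E}
    (hf : ∀ t, HasDerivAt f (v (f t)) t) (hg : ∀ t, HasDerivAt g (v (g t)) t) {t₀ : ℝ}
    (h : f t₀ = g t₀) : f = g := by
  funext t
  set a := min t t₀ - 1
  set b := max t t₀ + 1
  have hf_cont : ContinuousOn f (Icc a b) := fun s _ => (hf s).continuousAt.continuousWithinAt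
  have hg_cont : ContinuousOn g (Icc a b) := fun s _ => (hg s).continuousAt.continuousWithinAt
  set S := f '' Icc a b ∪ g '' Icc a b
  obtain ⟨K, hK⟩ := (hv.locallyLipschitzOn (s := S)).exists_lipschitzOnWith_of_compact
    ((isCompact_Icc.image_of_continuousOn hf_cont).union
      (isCompact_Icc.image_of_continuousOn hg_cont))
  have ht₀ : t₀ ∈ Ioo a b := ⟨by grind, by grind⟩
  refine ODE_solution_unique_of_mem_Icc (v := fun _ => v) (s := fun _ => S) (fun _ _ => hK) ht₀
    hf_cont (fun s _ => hf s) (fun s hs => Or.inl ⟨s, Ioo_subset_Icc_self hs, rfl⟩)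
    hg_cont (fun s _ => hg s) (fun s hs => Or.inr ⟨s, Ioo_subset_Icc_self hs, rfl⟩) h
    ⟨by grind, by grind⟩

theorem stmt_1 (w : ℝ → ℝ)
    (hw : ContDiff ℝ 2 w)
    (hpos : ∀ y, 0 < w y)
    (hode : ∀ y, deriv (deriv w) y - w y + (w y)^2 = 0)
    (hw0 : deriv w 0 = 0)
    (htop : Tendsto w atTop (nhds 0)) :
    ∀ y : ℝ, w y = (3/2) * (1 / Real.cosh (y/2))^2 := by
  have hV : ∀ u : ℝ, HasDerivAt (fun u => u ^ 2 / 2 - u ^ 3 / 3) (u - u ^ 2) u := fun u =>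
    (((hasDerivAt_pow 2 u).div_const 2).sub ((hasDerivAt_pow 3 u).div_const 3)).congr_deriv
      (by ring)
  have hw' : ∀ y, HasDerivAt w (deriv w y) y :=
    fun y => (hw.differentiable (by norm_num) y).hasDerivAt
  have hw'' : ∀ y, HasDerivAt (deriv w) (w y - w y ^ 2) y := fun y =>
    (hw.differentiable_deriv_two y).hasDerivAt.congr_deriv (by linarith [hode y])
  have hw00 : w 0 = 3/2 := by
    have h := energy_eq_of_tendsto hV hw' hw'' htop 0
    rw [hw0] at h
    exact eq_three_halves_of_sq_div_two_sub_cube_div_three_eq_zero (hpos 0) (by linarith)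
  have hfield : LocallyLipschitz fun p : ℝ × ℝ => (p.2, p.1 - p.1 ^ 2) :=
    (by fun_prop : ContDiff ℝ 1 fun p : ℝ × ℝ => (p.2, p.1 - p.1 ^ 2)).locallyLipschitz
  have hsol := hfield.eq_of_hasDerivAt (fun t => (hw' t).prodMk (hw'' t))
    (fun t => (hasDerivAt_groundState t).prodMk (hasDerivAt_groundStateDeriv t)) (t₀ := 0)
    (Prod.ext (hw00.trans groundState_zero.symm) (hw0.trans groundStateDeriv_zero.symm))
  exact fun y => congr_arg Prod.fst (congr_fun hsol y)
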